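/- arXiv:2509.04207 — 7 statements merged into one kernel-verified Lean document; each statement's English description precedes it below -/
import Mathlib

section
/- For every point p = (ρ, η, θ, φ) with 0 < ρ < 1 and η ≥ 0, and all vectors a = (a₁,a₂,a₃,a₄), b = (b₁,b₂,b₃,b₄) in ℝ⁴, one has ω₀(Dφ_N(p)a, Dφ_N(p)b) = (cos δ/(1−ρ²))(a₁b₂ − a₂b₁) + (ρ²η sin δ/(1−ρ²))(a₁b₃ − a₃b₁) − (η sin δ/(1−ρ²))(a₁b₄ − a₄b₁) − ρ sin δ (a₂b₃ − a₃b₂) + ρη cos δ (a₃b₄ − a₄b₃), where δ = φ − θ and Dφ_N(p) denotes the (Fréchet) derivative of φ_N at p. -/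
open Real

/-- The canonical symplectic form on ℝ⁶ (coordinates x, y, z, u, v, w). -/
def omega0 (a b : Fin 6 → ℝ) : ℝ :=
  a 0 * b 3 - a 3 * b 0 + a 1 * b 4 - a 4 * b 1 + a 2 * b 5 - a 5 * b 2

/-- The northern chart parametrization `φ_N (ρ, η, θ, φ) = (x, y, z, u, v, w)`. -/
noncomputable def phiN (p : Fin 4 → ℝ) : Fin 6 → ℝ :=
  ![p 0 * Real.cos (p 2),
    p 0 * Real.sin (p 2),
    Real.sqrt (1 - p 0 ^ 2),
    p 1 * Real.cos (p 3),
    p 1 * Real.sin (p 3),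
    -(p 0 * p 1 * Real.cos (p 3 - p 2)) / Real.sqrt (1 - p 0 ^ 2)]

/-- the pullback of the canonical symplectic form of ℝ⁶ by `φ_N`. -/
theorem pullback_omega0_by_phiN
    (p : Fin 4 → ℝ) (h0 : 0 < p 0) (h1 : p 0 < 1) (h2 : 0 ≤ p 1)
    (a b : Fin 4 → ℝ) :
    omega0 (fderiv ℝ phiN p a) (fderiv ℝ phiN p b) =
      Real.cos (p 3 - p 2) / (1 - p 0 ^ 2) * (a 0 * b 1 - a 1 * b 0)
      + p 0 ^ 2 * p 1 * Real.sin (p 3 - p 2) / (1 - p 0 ^ 2) * (a 0 * b 2 - a 2 * b 0)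
      - p 1 * Real.sin (p 3 - p 2) / (1 - p 0 ^ 2) * (a 0 * b 3 - a 3 * b 0)
      - p 0 * Real.sin (p 3 - p 2) * (a 1 * b 2 - a 2 * b 1)
      + p 0 * p 1 * Real.cos (p 3 - p 2) * (a 2 * b 3 - a 3 * b 2) := by
  have hq : (0:ℝ) < 1 - p 0 ^ 2 := by nlinarith
  have hqne : (1:ℝ) - p 0 ^ 2 ≠ 0 := ne_of_gt hq
  have hsp : 0 < Real.sqrt (1 - p 0 ^ 2) := Real.sqrt_pos.mpr hq
  have hsne : Real.sqrt (1 - p 0 ^ 2) ≠ 0 := ne_of_gt hsp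
  have hpr : ∀ i : Fin 4, HasFDerivAt (fun q : Fin 4 → ℝ => q i)
      (ContinuousLinearMap.proj i : (Fin 4 → ℝ) →L[ℝ] ℝ) p := fun i => hasFDerivAt_apply i p
  have h0' := (hpr 0).mul ((hpr 2).cos)
  have h1' := (hpr 0).mul ((hpr 2).sin)
  have hpow := (hasDerivAt_pow 2 (p 0)).comp_hasFDerivAt p (hpr 0)
  have hsq := (hasFDerivAt_const (1:ℝ) p).sub hpow
  have h2' := hsq.sqrt hqne
  have h3' := (hpr 1).mul ((hpr 3).cos)
  have h4' := (hpr 1).mul ((hpr 3).sin)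
  have hinv := (hasDerivAt_inv hsne).comp_hasFDerivAt p h2'
  have h5' := (((hpr 0).mul (hpr 1)).mul (((hpr 3).sub (hpr 2)).cos)).neg.mul hinv
  simp only [Function.comp_def] at hpow hsq h2' hinv h5'
  simp only [Pi.mul_def, Pi.sub_def, Pi.neg_def] at h0' h1' h2' h3' h4' hsq hinv h5'
  have hd : ∀ j : Fin 6, DifferentiableAt ℝ (fun x => phiN x j) p := by
    intro j
    fin_cases j
    exacts [h0'.differentiableAt, h1'.differentiableAt, h2'.differentiableAt,
      h3'.differentiableAt, h4'.differentiableAt, h5'.differentiableAt]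
  have e : fderiv ℝ phiN p
      = ContinuousLinearMap.pi (fun j => fderiv ℝ (fun x => phiN x j) p) := fderiv_pi hd
  have hfd : ∀ v : Fin 4 → ℝ, ∀ i : Fin 6,
      fderiv ℝ phiN p v i = fderiv ℝ (fun x => phiN x i) p v := by
    intro v i; rw [e]; rfl
  simp only [omega0, hfd]
  rw [show (fun x => phiN x 0) = (fun q : Fin 4 → ℝ => q 0 * Real.cos (q 2)) from rfl,
    show (fun x => phiN x 1) = (fun q : Fin 4 → ℝ => q 0 * Real.sin (q 2)) from rfl,
    show (fun x => phiN x 2) = (fun q : Fin 4 → ℝ => Real.sqrt (1 - q 0 ^ 2)) from rfl,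
    show (fun x => phiN x 3) = (fun q : Fin 4 → ℝ => q 1 * Real.cos (q 3)) from rfl,
    show (fun x => phiN x 4) = (fun q : Fin 4 → ℝ => q 1 * Real.sin (q 3)) from rfl,
    show (fun x => phiN x 5) = (fun q : Fin 4 → ℝ =>
      -(q 0 * q 1 * Real.cos (q 3 - q 2)) * (Real.sqrt (1 - q 0 ^ 2))⁻¹) from rfl,
    h0'.fderiv, h1'.fderiv, h2'.fderiv, h3'.fderiv, h4'.fderiv, h5'.fderiv]
  simp only [ContinuousLinearMap.add_apply, ContinuousLinearMap.smul_apply,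
    ContinuousLinearMap.sub_apply, ContinuousLinearMap.neg_apply,
    ContinuousLinearMap.zero_apply, ContinuousLinearMap.proj_apply, smul_eq_mul]
  norm_num
  simp only [Real.cos_sub, Real.sin_sub]
  have ht2 : Real.sqrt (1 - p 0 ^ 2) ^ 2 = 1 - p 0 ^ 2 := Real.sq_sqrt hq.le
  set t := Real.sqrt (1 - p 0 ^ 2) with htdef
  simp only [div_eq_mul_inv]
  rw [← ht2]
  rw [show ((t ^ 2)⁻¹ : ℝ) = (t⁻¹)^2 from (inv_pow t 2).symm]
  set u := t⁻¹ with hudef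
  have hu : t * u = 1 := mul_inv_cancel₀ hsne
  have hu2 : (1 - p 0 ^ 2) * u ^ 2 = 1 := by
    rw [← ht2, hudef, ← mul_pow, mul_inv_cancel₀ hsne, one_pow]
  linear_combination
    (-(Real.cos (p 2) * Real.cos (p 3) + Real.sin (p 2) * Real.sin (p 3)) *
        (a 0 * b 1 - a 1 * b 0)
      + p 1 * (Real.sin (p 3) * Real.cos (p 2) - Real.cos (p 3) * Real.sin (p 2)) *
        (a 0 * b 3 - a 3 * b 0)) * hu2
end

section
/- Along every solution (ρ, η, θ, φ) : I → ℝ⁴ of the Hamiltonian equations of the spherical pendulum with potential V in the northern chart, the angular momentum ρ(t)η(t) sin(φ(t) − θ(t)) is constant on I. -/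
open Real

/-- The potential in the northern chart radial coordinate: `Ṽ(ρ) = V(√(1 - ρ²))`. -/
noncomputable def Vtilde (V : ℝ → ℝ) (r : ℝ) : ℝ := V (Real.sqrt (1 - r ^ 2))

/-- `(ρ, η, θ, φ) : (a, b) → ℝ⁴` is a solution of the Hamiltonian equations of the
spherical pendulum with potential `V` in the northern chart: `0 < ρ < 1`, `η > 0`,
and with `δ = φ - θ`,
`ρ' = η cos δ`,
`η' = -(ρη(1 - ρ² sin²δ)/(1 - ρ²) + (1 - ρ²)Ṽ'(ρ)/η) · η cos δ`,
`θ' = (η/ρ) sin δ`,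
`φ' = (ρη(1 - ρ² sin²δ)/(1 - ρ²) + (1 - ρ²)Ṽ'(ρ)/η) · sin δ`. -/
def IsPendulumSolution (V : ℝ → ℝ) (a b : ℝ) (ρ η θ φ : ℝ → ℝ) : Prop :=
  ∀ t ∈ Set.Ioo a b,
    (0 < ρ t ∧ ρ t < 1 ∧ 0 < η t) ∧
    HasDerivAt ρ (η t * Real.cos (φ t - θ t)) t ∧
    HasDerivAt η
      (-((ρ t * η t * (1 - ρ t ^ 2 * Real.sin (φ t - θ t) ^ 2) / (1 - ρ t ^ 2)
          + (1 - ρ t ^ 2) * deriv (Vtilde V) (ρ t) / η t)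
        * (η t * Real.cos (φ t - θ t)))) t ∧
    HasDerivAt θ (η t / ρ t * Real.sin (φ t - θ t)) t ∧
    HasDerivAt φ
      ((ρ t * η t * (1 - ρ t ^ 2 * Real.sin (φ t - θ t) ^ 2) / (1 - ρ t ^ 2)
          + (1 - ρ t ^ 2) * deriv (Vtilde V) (ρ t) / η t)
        * Real.sin (φ t - θ t)) t

/-- the angular momentum `ρ η sin(φ - θ)` is constant along every
solution of the spherical pendulum equations in the northern chart. -/
theorem angular_momentum_constant
    (V : ℝ → ℝ) (hV : ContDiff ℝ 1 V) (a b : ℝ) (ρ η θ φ : ℝ → ℝ)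
    (hsol : IsPendulumSolution V a b ρ η θ φ) :
    ∀ s ∈ Set.Ioo a b, ∀ t ∈ Set.Ioo a b,
      ρ s * η s * Real.sin (φ s - θ s) = ρ t * η t * Real.sin (φ t - θ t) := by
  set L : ℝ → ℝ := fun t => ρ t * η t * Real.sin (φ t - θ t) with hL
  have key : ∀ t ∈ Set.Ioo a b, HasDerivAt L 0 t := by
    intro t ht
    obtain ⟨⟨hρ0, hρ1, hη0⟩, hρ', hη', hθ', hφ'⟩ := hsol t ht
    set A := ρ t * η t * (1 - ρ t ^ 2 * Real.sin (φ t - θ t) ^ 2) / (1 - ρ t ^ 2)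
          + (1 - ρ t ^ 2) * deriv (Vtilde V) (ρ t) / η t with hA
    have hsin : HasDerivAt (fun u => Real.sin (φ u - θ u))
        (Real.cos (φ t - θ t) * (A * Real.sin (φ t - θ t) - η t / ρ t * Real.sin (φ t - θ t))) t :=
      by have := (Real.hasDerivAt_sin (φ t - θ t)).comp t (hφ'.sub hθ'); exact this
    have h : HasDerivAt L _ t := ((hρ'.mul hη').mul hsin)
    convert h using 1
    simp only [Pi.mul_apply]
    field_simp
    ring
  intro s hs t ht
  have h0 : ∀ x ∈ Set.Ioo a b,
      HasDerivWithinAt L (0 : ℝ) (Set.Ioo a b) x := fun x hx => (key x hx).hasDerivWithinAt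
  have := (convex_Ioo a b).norm_image_sub_le_of_norm_hasDerivWithin_le
    (C := 0) h0 (fun x hx => by simp) ht hs
  simp only [zero_mul, norm_le_zero_iff, sub_eq_zero] at this
  exact this
end

section
/- Along every solution (ρ, η, θ, φ) : I → ℝ⁴ of the Hamiltonian equations of the spherical pendulum with potential V in the northern chart, the mechanical energy (η(t)²/2)·(1 − ρ(t)² sin²δ(t))/(1 − ρ(t)²) + Ṽ(ρ(t)), where δ = φ − θ, is constant on I. -/
open Real

lemma vtilde_hasDerivAt (V : ℝ → ℝ) (hV : ContDiff ℝ 1 V) {r : ℝ}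
    (h1 : -1 < r) (h2 : r < 1) :
    HasDerivAt (Vtilde V) (deriv (Vtilde V) r) r := by
  have hpos : 0 < 1 - r ^ 2 := by nlinarith
  have hinner : HasDerivAt (fun x : ℝ => 1 - x ^ 2) (-(2 * r)) r := by
    simpa using (hasDerivAt_pow 2 r).const_sub 1
  have hsqrt : HasDerivAt Real.sqrt (1 / (2 * Real.sqrt (1 - r ^ 2))) (1 - r ^ 2) :=
    Real.hasDerivAt_sqrt hpos.ne'
  have hVd : HasDerivAt V (deriv V (Real.sqrt (1 - r ^ 2))) (Real.sqrt (1 - r ^ 2)) :=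
    ((hV.differentiable one_ne_zero) _).hasDerivAt
  have h := hVd.comp r (hsqrt.comp r hinner)
  have h' : HasDerivAt (Vtilde V)
      (deriv V (Real.sqrt (1 - r ^ 2)) * (1 / (2 * Real.sqrt (1 - r ^ 2)) * -(2 * r))) r := h
  rw [h'.deriv]; exact h'

/-- the mechanical energy `(η²/2)(1 - ρ² sin²δ)/(1 - ρ²) + Ṽ(ρ)`,
`δ = φ - θ`, is constant along every solution of the spherical pendulum
equations in the northern chart. -/
theorem energy_constant
    (V : ℝ → ℝ) (hV : ContDiff ℝ 1 V) (a b : ℝ) (ρ η θ φ : ℝ → ℝ)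
    (hsol : IsPendulumSolution V a b ρ η θ φ) :
    ∀ s ∈ Set.Ioo a b, ∀ t ∈ Set.Ioo a b,
      η s ^ 2 / 2 * ((1 - ρ s ^ 2 * Real.sin (φ s - θ s) ^ 2) / (1 - ρ s ^ 2))
          + Vtilde V (ρ s)
        = η t ^ 2 / 2 * ((1 - ρ t ^ 2 * Real.sin (φ t - θ t) ^ 2) / (1 - ρ t ^ 2))
          + Vtilde V (ρ t) := by
  intro s hs t ht
  set E : ℝ → ℝ := fun u =>
    η u ^ 2 / 2 * ((1 - ρ u ^ 2 * Real.sin (φ u - θ u) ^ 2) / (1 - ρ u ^ 2))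
      + Vtilde V (ρ u) with hEdef
  suffices hE : ∀ u ∈ Set.Ioo a b, HasDerivAt E 0 u by
    have hdiff : DifferentiableOn ℝ E (Set.Ioo a b) := fun u hu =>
      (hE u hu).differentiableAt.differentiableWithinAt
    exact (convex_Ioo a b).is_const_of_fderivWithin_eq_zero hdiff
      (fun u hu => by
        rw [fderivWithin_of_isOpen isOpen_Ioo hu, (hE u hu).hasFDerivAt.fderiv]
        ext
        simp) hs ht
  intro u hu
  obtain ⟨⟨hr0, hr1, he0⟩, hρ, hη, hθ, hφ⟩ := hsol u hu
  have hden : (1:ℝ) - ρ u ^ 2 ≠ 0 := by nlinarith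
  have hrne : ρ u ≠ 0 := ne_of_gt hr0
  have hene : η u ≠ 0 := ne_of_gt he0
  have hVd : HasDerivAt (Vtilde V) (deriv (Vtilde V) (ρ u)) (ρ u) :=
    vtilde_hasDerivAt V hV (by linarith) hr1
  have hVcomp := hVd.comp u hρ
  have hδ := hφ.sub hθ
  have hsin := (Real.hasDerivAt_sin (φ u - θ u)).comp u hδ
  have hρsq := hρ.pow 2
  have hsinsq := hsin.pow 2
  have hnum := (hasDerivAt_const u (1:ℝ)).sub (hρsq.mul hsinsq)
  have hden' := (hasDerivAt_const u (1:ℝ)).sub hρsq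
  have hfrac := hnum.div hden' hden
  have hF := (hη.pow 2).div_const 2 |>.mul hfrac
  have hE' := hF.add hVcomp
  refine hE'.congr_deriv ?_
  simp only [Pi.sub_apply, Pi.mul_apply, Pi.div_apply, Pi.pow_apply, Function.comp_apply]
  field_simp
  ring
end

section
/- Let (ρ, η, θ, φ) : I → ℝ⁴ be a solution of the Hamiltonian equations of the spherical pendulum with potential V in the northern chart, and let j, h be the constant values of ρη sin δ and of (η²/2)(1 − ρ² sin²δ)/(1 − ρ²) + Ṽ(ρ) along it, where δ = φ − θ. Then at every t ∈ I at which cos δ(t) ≥ 0 one has ρ'(t) = √((1 − ρ(t)²)(2ρ(t)²(h − Ṽ(ρ(t))) − j²))/ρ(t), and at every t at which cos δ(t) ≤ 0 one has ρ'(t) = −√((1 − ρ(t)²)(2ρ(t)²(h − Ṽ(ρ(t))) − j²))/ρ(t). -/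
open Real

/-- along a solution with angular momentum `j` and energy `h`, the
radial velocity satisfies
`ρ' = ±√((1 - ρ²)(2ρ²(h - Ṽ(ρ)) - j²))/ρ`, with sign `+` where `cos δ ≥ 0`
and sign `-` where `cos δ ≤ 0`. -/
theorem radial_equation_of_motion
    (V : ℝ → ℝ) (hV : ContDiff ℝ 1 V) (a b : ℝ) (ρ η θ φ : ℝ → ℝ)
    (hsol : IsPendulumSolution V a b ρ η θ φ)
    (j h : ℝ)
    (hj : ∀ t ∈ Set.Ioo a b, ρ t * η t * Real.sin (φ t - θ t) = j)
    (hh : ∀ t ∈ Set.Ioo a b,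
      η t ^ 2 / 2 * ((1 - ρ t ^ 2 * Real.sin (φ t - θ t) ^ 2) / (1 - ρ t ^ 2))
        + Vtilde V (ρ t) = h) :
    ∀ t ∈ Set.Ioo a b,
      (0 ≤ Real.cos (φ t - θ t) →
        deriv ρ t =
          Real.sqrt ((1 - ρ t ^ 2) * (2 * ρ t ^ 2 * (h - Vtilde V (ρ t)) - j ^ 2))
            / ρ t) ∧
      (Real.cos (φ t - θ t) ≤ 0 →
        deriv ρ t =
          -(Real.sqrt ((1 - ρ t ^ 2) * (2 * ρ t ^ 2 * (h - Vtilde V (ρ t)) - j ^ 2))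
            / ρ t)) := by
  intro t ht
  obtain ⟨⟨hρ0, hρ1, hη0⟩, hdρ, -, -, -⟩ := hsol t ht
  have hdρ' : deriv ρ t = η t * Real.cos (φ t - θ t) := hdρ.deriv
  have h1ρ : (0:ℝ) < 1 - ρ t ^ 2 := by nlinarith
  have hkey : (1 - ρ t ^ 2) * (2 * ρ t ^ 2 * (h - Vtilde V (ρ t)) - j ^ 2)
      = (ρ t * η t * Real.cos (φ t - θ t)) ^ 2 := by
    rw [← hj t ht, ← hh t ht]
    have hs : Real.sin (φ t - θ t) ^ 2 = 1 - Real.cos (φ t - θ t) ^ 2 := by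
      have := Real.sin_sq_add_cos_sq (φ t - θ t); linarith
    field_simp
    linear_combination (-1) * η t ^ 2 * hs
  constructor
  · intro hc
    rw [hdρ', hkey, Real.sqrt_sq (by positivity)]
    field_simp
  · intro hc
    rw [hdρ', hkey]
    have : Real.sqrt ((ρ t * η t * Real.cos (φ t - θ t)) ^ 2)
        = -(ρ t * η t * Real.cos (φ t - θ t)) := by
      rw [Real.sqrt_sq_eq_abs, abs_of_nonpos (mul_nonpos_of_nonneg_of_nonpos (by positivity) hc)]
    rw [this]
    field_simp
end

section
/- Let (ρ, η, θ, φ) : I → ℝ⁴ be a solution of the Hamiltonian equations of the spherical pendulum with potential V in the northern chart, and write δ = φ − θ. At every time t₁ ∈ I with sin δ(t₁) = 1 (equivalently cos δ(t₁) = 0 with δ(t₁) ≡ π/2 mod 2π), one has δ'(t₁) = (1 − ρ(t₁)²)(ρ(t₁)Ṽ'(ρ(t₁)) − η(t₁)²)/(ρ(t₁)η(t₁)); in particular, if Ṽ'(ρ(t₁)) ≤ 0 then δ'(t₁) < 0. -/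
open Real

/-- along a solution, at a time `t₁` where `sin δ(t₁) = 1`
(`δ = φ - θ`), one has
`δ'(t₁) = (1 - ρ²)(ρ Ṽ'(ρ) - η²)/(ρ η)` evaluated at `t₁`; in particular if
`Ṽ'(ρ(t₁)) ≤ 0` then `δ'(t₁) < 0`. -/
theorem delta_prime_at_turning_time
    (V : ℝ → ℝ) (hV : ContDiff ℝ 1 V) (a b : ℝ) (ρ η θ φ : ℝ → ℝ)
    (hsol : IsPendulumSolution V a b ρ η θ φ)
    (t₁ : ℝ) (ht₁ : t₁ ∈ Set.Ioo a b)
    (hδ : Real.sin (φ t₁ - θ t₁) = 1) :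
    deriv (fun t => φ t - θ t) t₁
      = (1 - ρ t₁ ^ 2) * (ρ t₁ * deriv (Vtilde V) (ρ t₁) - η t₁ ^ 2)
        / (ρ t₁ * η t₁) ∧
    (deriv (Vtilde V) (ρ t₁) ≤ 0 → deriv (fun t => φ t - θ t) t₁ < 0) := by
  obtain ⟨⟨hρ0, hρ1, hη0⟩, _, _, hθ', hφ'⟩ := hsol t₁ ht₁
  have hδ' : HasDerivAt (fun t => φ t - θ t)
      ((ρ t₁ * η t₁ * (1 - ρ t₁ ^ 2 * Real.sin (φ t₁ - θ t₁) ^ 2) / (1 - ρ t₁ ^ 2)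
          + (1 - ρ t₁ ^ 2) * deriv (Vtilde V) (ρ t₁) / η t₁)
        * Real.sin (φ t₁ - θ t₁) - η t₁ / ρ t₁ * Real.sin (φ t₁ - θ t₁)) t₁ := hφ'.sub hθ'
  have h1ρ : (1 : ℝ) - ρ t₁ ^ 2 > 0 := by nlinarith
  have hρne : ρ t₁ ≠ 0 := ne_of_gt hρ0
  have hηne : η t₁ ≠ 0 := ne_of_gt hη0
  have h1ρne : (1 : ℝ) - ρ t₁ ^ 2 ≠ 0 := ne_of_gt h1ρ
  have key : deriv (fun t => φ t - θ t) t₁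
      = (1 - ρ t₁ ^ 2) * (ρ t₁ * deriv (Vtilde V) (ρ t₁) - η t₁ ^ 2) / (ρ t₁ * η t₁) := by
    rw [hδ'.deriv, hδ]
    field_simp
    ring
  refine ⟨key, fun hVle => ?_⟩
  rw [key]
  apply div_neg_of_neg_of_pos
  · exact mul_neg_of_pos_of_neg h1ρ (by nlinarith)
  · positivity
end

section
/- For every point (x,y,z,u,v,w) ∈ S with z² < 1, one has H(x,y,z,u,v,w) ≥ J(x,y,z,u,v,w)²/(2(1 − z²)) + z². Consequently, H(p) ≥ J(p)²/2 for every p ∈ S. -/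
open Real

/-- on `T*S²`, at points with `z² < 1` one has
`H ≥ J²/(2(1 - z²)) + z²`, and consequently `H ≥ J²/2` everywhere on `T*S²`,
for the symmetric quadratic spherical pendulum `J = xv - yu`,
`H = (u² + v² + w²)/2 + z²`. -/
theorem energy_lower_bound
    (x y z u v w : ℝ)
    (hsph : x ^ 2 + y ^ 2 + z ^ 2 = 1)
    (htan : x * u + y * v + z * w = 0) :
    (z ^ 2 < 1 →
      (u ^ 2 + v ^ 2 + w ^ 2) / 2 + z ^ 2 ≥
        (x * v - y * u) ^ 2 / (2 * (1 - z ^ 2)) + z ^ 2) ∧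
    (u ^ 2 + v ^ 2 + w ^ 2) / 2 + z ^ 2 ≥ (x * v - y * u) ^ 2 / 2 := by
  have key : (x * v - y * u) ^ 2 ≤ (1 - z ^ 2) * (u ^ 2 + v ^ 2) := by
    nlinarith [sq_nonneg (x * u + y * v), sq_nonneg z]
  have hz1 : z ^ 2 ≤ 1 := by nlinarith [sq_nonneg x, sq_nonneg y]
  constructor
  · intro hz
    have hpos : 0 < 1 - z ^ 2 := by linarith
    rw [ge_iff_le, add_le_add_iff_right, div_le_iff₀ (by linarith)]
    nlinarith [sq_nonneg w]
  · nlinarith [sq_nonneg w, sq_nonneg (u ^ 2 + v ^ 2), mul_nonneg (sq_nonneg z) (add_nonneg (sq_nonneg u) (sq_nonneg v))]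
end

section
/- Let V : ℝ → ℝ be continuously differentiable, set Ṽ(ρ) = V(√(1−ρ²)), and fix j, h ∈ ℝ. Suppose ρ : [0, T] → (0, 1) is differentiable, satisfies ρ'(t) = √((1 − ρ(t)²)(2ρ(t)²(h − Ṽ(ρ(t))) − j²))/ρ(t) for all t ∈ [0, T], and the quantity (1 − s²)(2s²(h − Ṽ(s)) − j²) is strictly positive for all s in the closed interval between ρ(0) and ρ(T). Then for every t ∈ [0, T], ∫_{ρ(0)}^{ρ(t)} s/√((1 − s²)(2s²(h − Ṽ(s)) − j²)) ds = t. -/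
open Real intervalIntegral

/-- the reduced radial equation of motion can be solved by
quadrature: if `ρ : [0, T] → (0, 1)` satisfies
`ρ' = √((1 - ρ²)(2ρ²(h - Ṽ(ρ)) - j²))/ρ` and the radicand is strictly positive
on the interval between `ρ(0)` and `ρ(T)`, then
`∫_{ρ(0)}^{ρ(t)} s/√((1 - s²)(2s²(h - Ṽ(s)) - j²)) ds = t` for `t ∈ [0, T]`. -/
theorem radial_quadrature
    (V : ℝ → ℝ) (hV : ContDiff ℝ 1 V) (j h T : ℝ) (hT : 0 ≤ T)
    (ρ : ℝ → ℝ)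
    (hrange : ∀ t ∈ Set.Icc 0 T, ρ t ∈ Set.Ioo (0 : ℝ) 1)
    (hode : ∀ t ∈ Set.Icc 0 T,
      HasDerivAt ρ
        (Real.sqrt ((1 - ρ t ^ 2) *
            (2 * ρ t ^ 2 * (h - Vtilde V (ρ t)) - j ^ 2)) / ρ t) t)
    (hpos : ∀ s ∈ Set.uIcc (ρ 0) (ρ T),
      0 < (1 - s ^ 2) * (2 * s ^ 2 * (h - Vtilde V s) - j ^ 2)) :
    ∀ t ∈ Set.Icc 0 T,
      ∫ s in (ρ 0)..(ρ t),
        s / Real.sqrt ((1 - s ^ 2) *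
          (2 * s ^ 2 * (h - Vtilde V s) - j ^ 2)) = t := by
  set W : ℝ → ℝ := fun s => (1 - s ^ 2) * (2 * s ^ 2 * (h - Vtilde V s) - j ^ 2) with hWdef
  have hVt : Continuous (Vtilde V) :=
    hV.continuous.comp ((continuous_const.sub (continuous_pow 2)).sqrt)
  have hWcont : Continuous W := by
    apply Continuous.mul
    · exact continuous_const.sub (continuous_pow 2)
    · exact ((continuous_const.mul (continuous_pow 2)).mul
        (continuous_const.sub hVt)).sub continuous_const
  -- monotonicity of ρ on [0, T]
  have hmono : MonotoneOn ρ (Set.Icc 0 T) := by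
    apply monotoneOn_of_deriv_nonneg (convex_Icc 0 T)
    · exact fun x hx => (hode x hx).continuousAt.continuousWithinAt
    · intro x hx
      rw [interior_Icc] at hx
      exact (hode x (Set.Ioo_subset_Icc_self hx)).differentiableAt.differentiableWithinAt
    · intro x hx
      rw [interior_Icc] at hx
      have hx' : x ∈ Set.Icc 0 T := Set.Ioo_subset_Icc_self hx
      rw [(hode x hx').deriv]
      exact div_nonneg (Real.sqrt_nonneg _) (hrange x hx').1.le
  have h0T : ρ 0 ≤ ρ T := hmono ⟨le_refl 0, hT⟩ ⟨hT, le_refl T⟩ hT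
  have huIcc : Set.uIcc (ρ 0) (ρ T) = Set.Icc (ρ 0) (ρ T) := Set.uIcc_of_le h0T
  have hρmem : ∀ t ∈ Set.Icc (0:ℝ) T, ρ t ∈ Set.Icc (ρ 0) (ρ T) := fun t ht =>
    ⟨hmono ⟨le_refl 0, hT⟩ ht ht.1, hmono ht ⟨hT, le_refl T⟩ ht.2⟩
  set U : Set ℝ := {s | 0 < W s} with hUdef
  have hUopen : IsOpen U := isOpen_lt continuous_const hWcont
  have hIccU : Set.Icc (ρ 0) (ρ T) ⊆ U := fun s hs => hpos s (huIcc ▸ hs)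
  set g : ℝ → ℝ := fun s => s / Real.sqrt (W s) with hgdef
  have hgC : ∀ s ∈ U, ContinuousAt g s := by
    intro s hs
    exact continuousAt_id.div ((Real.continuous_sqrt.comp hWcont).continuousAt)
      (ne_of_gt (Real.sqrt_pos.2 hs))
  -- the function G
  set F : ℝ → ℝ := fun u => ∫ s in (ρ 0)..u, g s with hFdef
  have hFderiv : ∀ t ∈ Set.Icc (0:ℝ) T, HasDerivAt F (g (ρ t)) (ρ t) := by
    intro t ht
    have hmem := hρmem t ht
    apply intervalIntegral.integral_hasDerivAt_right
    · apply ContinuousOn.intervalIntegrable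
      intro s hs
      have : s ∈ Set.Icc (ρ 0) (ρ T) := by
        rw [Set.uIcc_of_le (hρmem t ht).1] at hs
        exact ⟨hs.1, le_trans hs.2 hmem.2⟩
      exact (hgC s (hIccU this)).continuousWithinAt
    · exact ContinuousAt.stronglyMeasurableAtFilter hUopen hgC (ρ t) (hIccU hmem)
    · exact hgC (ρ t) (hIccU hmem)
  have hGderiv : ∀ t ∈ Set.Icc (0:ℝ) T,
      HasDerivAt (fun u => F (ρ u) - u) 0 t := by
    intro t ht
    have hmem := hρmem t ht
    have hWpos : 0 < W (ρ t) := hIccU hmem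
    have hρpos : 0 < ρ t := (hrange t ht).1
    have hchain : HasDerivAt (fun u => F (ρ u))
        (g (ρ t) * (Real.sqrt (W (ρ t)) / ρ t)) t :=
      (hFderiv t ht).comp t (hode t ht)
    have hval : g (ρ t) * (Real.sqrt (W (ρ t)) / ρ t) = 1 := by
      have hs : Real.sqrt (W (ρ t)) ≠ 0 := ne_of_gt (Real.sqrt_pos.2 hWpos)
      simp only [hgdef]
      field_simp
    rw [hval] at hchain
    have hsub : HasDerivAt (fun u => F (ρ u) - u) (1 - 1) t := hchain.sub (hasDerivAt_id' t)
    rw [sub_self] at hsub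
    exact hsub
  have hconst := constant_of_has_deriv_right_zero
    (f := fun u => F (ρ u) - u) (a := 0) (b := T)
    (fun x hx => ((hGderiv x hx).continuousAt).continuousWithinAt)
    (fun x hx => ((hGderiv x (Set.Ico_subset_Icc_self hx)).hasDerivWithinAt))
  intro t ht
  have := hconst t ht
  simp only [intervalIntegral.integral_same, hFdef, sub_zero] at this
  have hF0 : F (ρ 0) = 0 := intervalIntegral.integral_same
  have : F (ρ t) - t = F (ρ 0) - 0 := hconst t ht
  rw [hF0, sub_zero, sub_eq_zero] at this
  exact this
end
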